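/- arXiv:2009.00779 — 2 statements merged into one kernel-verified Lean document; each statement's English description precedes it below -/
import Mathlib

section
/- Let φ : ℝ³ → ℝ be a smooth function of (t,x,y) satisfying the 2D incompressible Euler vorticity equation Δφ_t + φ_x·Δφ_y − φ_y·Δφ_x = 0, where Δ = ∂_x² + ∂_y². Then q(t,x,y) = x² + y² satisfies the adjoint-symmetry determining equation along φ: ∂_t Δq + ∂_y Δ(φ_x·q) + ∂_x(Δφ_y·q) − ∂_x Δ(φ_y·q) − ∂_y(Δφ_x·q) = 0 holds identically. -/
/-- partial derivative in t (first variable) -/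
noncomputable def pt (f : ℝ × ℝ × ℝ → ℝ) : ℝ × ℝ × ℝ → ℝ :=
  fun p => deriv (fun s => f (s, p.2.1, p.2.2)) p.1

/-- partial derivative in x (second variable) -/
noncomputable def px (f : ℝ × ℝ × ℝ → ℝ) : ℝ × ℝ × ℝ → ℝ :=
  fun p => deriv (fun s => f (p.1, s, p.2.2)) p.2.1

/-- partial derivative in y (third variable) -/
noncomputable def py (f : ℝ × ℝ × ℝ → ℝ) : ℝ × ℝ × ℝ → ℝ :=
  fun p => deriv (fun s => f (p.1, p.2.1, s)) p.2.2

/-- spatial Laplacian Δ = ∂_x² + ∂_y² -/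
noncomputable def lap (f : ℝ × ℝ × ℝ → ℝ) : ℝ × ℝ × ℝ → ℝ :=
  fun p => px (px f) p + py (py f) p

/-- the 2D vorticity equation Δφ_t + φ_x·Δφ_y − φ_y·Δφ_x = 0 -/
def VorticityEq (φ : ℝ × ℝ × ℝ → ℝ) : Prop :=
  ∀ p : ℝ × ℝ × ℝ,
    pt (lap φ) p + px φ p * py (lap φ) p - py φ p * px (lap φ) p = 0

/-- the adjoint-symmetry determining equation along φ:
∂_t Δq + ∂_y Δ(φ_x·q) + ∂_x(Δφ_y·q) − ∂_x Δ(φ_y·q) − ∂_y(Δφ_x·q) = 0 -/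
def AdjointSymmetryEq (φ q : ℝ × ℝ × ℝ → ℝ) : Prop :=
  ∀ p : ℝ × ℝ × ℝ,
    pt (lap q) p
      + py (lap (fun r => px φ r * q r)) p
      + px (fun r => py (lap φ) r * q r) p
      - px (lap (fun r => py φ r * q r)) p
      - py (fun r => px (lap φ) r * q r) p = 0

section aux
variable {f g : ℝ × ℝ × ℝ → ℝ} {p : ℝ × ℝ × ℝ}

lemma lineX_hasDerivAt (a c s : ℝ) :
    HasDerivAt (fun x : ℝ => ((a, x, c) : ℝ × ℝ × ℝ)) (0, 1, 0) s :=
  HasDerivAt.prodMk (hasDerivAt_const s a) (HasDerivAt.prodMk (hasDerivAt_id s) (hasDerivAt_const s c))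

lemma lineY_hasDerivAt (a b s : ℝ) :
    HasDerivAt (fun y : ℝ => ((a, b, y) : ℝ × ℝ × ℝ)) (0, 0, 1) s :=
  HasDerivAt.prodMk (hasDerivAt_const s a) (HasDerivAt.prodMk (hasDerivAt_const s b) (hasDerivAt_id s))

lemma sliceX_hasDerivAt (hf : Differentiable ℝ f) (p : ℝ × ℝ × ℝ) :
    HasDerivAt (fun s => f (p.1, s, p.2.2)) (fderiv ℝ f p (0, 1, 0)) p.2.1 :=
  (hf p).hasFDerivAt.comp_hasDerivAt p.2.1 (lineX_hasDerivAt p.1 p.2.2 p.2.1)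

lemma sliceY_hasDerivAt (hf : Differentiable ℝ f) (p : ℝ × ℝ × ℝ) :
    HasDerivAt (fun s => f (p.1, p.2.1, s)) (fderiv ℝ f p (0, 0, 1)) p.2.2 :=
  (hf p).hasFDerivAt.comp_hasDerivAt p.2.2 (lineY_hasDerivAt p.1 p.2.1 p.2.2)

lemma px_eq (hf : Differentiable ℝ f) (p : ℝ × ℝ × ℝ) :
    px f p = fderiv ℝ f p (0, 1, 0) := (sliceX_hasDerivAt hf p).deriv

lemma py_eq (hf : Differentiable ℝ f) (p : ℝ × ℝ × ℝ) :
    py f p = fderiv ℝ f p (0, 0, 1) := (sliceY_hasDerivAt hf p).deriv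

lemma px_smooth (hf : ContDiff ℝ (⊤ : ℕ∞) f) : ContDiff ℝ (⊤ : ℕ∞) (px f) := by
  have h : px f = fun p => fderiv ℝ f p (0, 1, 0) :=
    funext (px_eq (hf.differentiable (by simp)))
  rw [h]
  exact (hf.fderiv_right (by simp)).clm_apply contDiff_const

lemma py_smooth (hf : ContDiff ℝ (⊤ : ℕ∞) f) : ContDiff ℝ (⊤ : ℕ∞) (py f) := by
  have h : py f = fun p => fderiv ℝ f p (0, 0, 1) :=
    funext (py_eq (hf.differentiable (by simp)))
  rw [h]
  exact (hf.fderiv_right (by simp)).clm_apply contDiff_const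

lemma lap_smooth (hf : ContDiff ℝ (⊤ : ℕ∞) f) : ContDiff ℝ (⊤ : ℕ∞) (lap f) :=
  (px_smooth (px_smooth hf)).add (py_smooth (py_smooth hf))

lemma fderiv_fderiv_apply (hf : ContDiff ℝ (⊤ : ℕ∞) f) (p v w : ℝ × ℝ × ℝ) :
    fderiv ℝ (fun r => fderiv ℝ f r v) p w = fderiv ℝ (fderiv ℝ f) p w v := by
  have h : (fun r => fderiv ℝ f r v)
      = (ContinuousLinearMap.apply ℝ ℝ v) ∘ (fderiv ℝ f) := rfl
  rw [h, fderiv_comp p (ContinuousLinearMap.apply ℝ ℝ v).differentiableAt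
    ((hf.fderiv_right (m := (⊤ : ℕ∞)) (by simp)).differentiable (by simp) p)]
  simp

lemma px_py_comm (hf : ContDiff ℝ (⊤ : ℕ∞) f) (p : ℝ × ℝ × ℝ) :
    px (py f) p = py (px f) p := by
  have hd := hf.differentiable (by simp)
  rw [px_eq ((py_smooth hf).differentiable (by simp)),
      py_eq ((px_smooth hf).differentiable (by simp))]
  have h1 : py f = fun r => fderiv ℝ f r (0, 0, 1) := funext (py_eq hd)
  have h2 : px f = fun r => fderiv ℝ f r (0, 1, 0) := funext (px_eq hd)
  rw [h1, h2, fderiv_fderiv_apply hf, fderiv_fderiv_apply hf]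
  exact second_derivative_symmetric (fun y => (hd y).hasFDerivAt)
    (((hf.fderiv_right (m := (⊤ : ℕ∞)) (by simp)).differentiable (by simp) p).hasFDerivAt) _ _

lemma px_py_comm_fun (hf : ContDiff ℝ (⊤ : ℕ∞) f) : px (py f) = py (px f) :=
  funext (px_py_comm hf)

lemma px_add (hf : ContDiff ℝ (⊤ : ℕ∞) f) (hg : ContDiff ℝ (⊤ : ℕ∞) g) (p : ℝ × ℝ × ℝ) :
    px (fun r => f r + g r) p = px f p + px g p :=
  deriv_fun_add (sliceX_hasDerivAt (hf.differentiable (by simp)) p).differentiableAt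
    (sliceX_hasDerivAt (hg.differentiable (by simp)) p).differentiableAt

lemma py_add (hf : ContDiff ℝ (⊤ : ℕ∞) f) (hg : ContDiff ℝ (⊤ : ℕ∞) g) (p : ℝ × ℝ × ℝ) :
    py (fun r => f r + g r) p = py f p + py g p :=
  deriv_fun_add (sliceY_hasDerivAt (hf.differentiable (by simp)) p).differentiableAt
    (sliceY_hasDerivAt (hg.differentiable (by simp)) p).differentiableAt

lemma px_mul (hf : ContDiff ℝ (⊤ : ℕ∞) f) (hg : ContDiff ℝ (⊤ : ℕ∞) g) (p : ℝ × ℝ × ℝ) :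
    px (fun r => f r * g r) p = px f p * g p + f p * px g p :=
  deriv_fun_mul (sliceX_hasDerivAt (hf.differentiable (by simp)) p).differentiableAt
    (sliceX_hasDerivAt (hg.differentiable (by simp)) p).differentiableAt

lemma py_mul (hf : ContDiff ℝ (⊤ : ℕ∞) f) (hg : ContDiff ℝ (⊤ : ℕ∞) g) (p : ℝ × ℝ × ℝ) :
    py (fun r => f r * g r) p = py f p * g p + f p * py g p :=
  deriv_fun_mul (sliceY_hasDerivAt (hf.differentiable (by simp)) p).differentiableAt
    (sliceY_hasDerivAt (hg.differentiable (by simp)) p).differentiableAt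

/- basic coordinate computations -/

lemma hQ_smooth : ContDiff ℝ (⊤ : ℕ∞) (fun r : ℝ × ℝ × ℝ => r.2.1 ^ 2 + r.2.2 ^ 2) :=
  ((contDiff_fst.comp contDiff_snd).pow 2).add ((contDiff_snd.comp contDiff_snd).pow 2)

lemma hCX_smooth (c : ℝ) : ContDiff ℝ (⊤ : ℕ∞) (fun r : ℝ × ℝ × ℝ => c * r.2.1 : ℝ × ℝ × ℝ → ℝ) :=
  contDiff_const.mul (contDiff_fst.comp contDiff_snd)

lemma hCY_smooth (c : ℝ) : ContDiff ℝ (⊤ : ℕ∞) (fun r : ℝ × ℝ × ℝ => c * r.2.2 : ℝ × ℝ × ℝ → ℝ) :=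
  contDiff_const.mul (contDiff_snd.comp contDiff_snd)

lemma Qx (p : ℝ × ℝ × ℝ) :
    px (fun r => r.2.1 ^ 2 + r.2.2 ^ 2) p = 2 * p.2.1 := by
  have h : HasDerivAt (fun s : ℝ => s ^ 2 + p.2.2 ^ 2) (2 * p.2.1) p.2.1 := by
    simpa using (hasDerivAt_pow 2 p.2.1).add_const (p.2.2 ^ 2)
  exact h.deriv

lemma Qy (p : ℝ × ℝ × ℝ) :
    py (fun r => r.2.1 ^ 2 + r.2.2 ^ 2) p = 2 * p.2.2 := by
  have h : HasDerivAt (fun s : ℝ => p.2.1 ^ 2 + s ^ 2) (2 * p.2.2) p.2.2 := by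
    simpa using ((hasDerivAt_pow 2 p.2.2).const_add (p.2.1 ^ 2))
  exact h.deriv

lemma CXx (c : ℝ) (p : ℝ × ℝ × ℝ) : px (fun r => c * r.2.1 : ℝ × ℝ × ℝ → ℝ) p = c := by
  have h : HasDerivAt (fun s : ℝ => c * s) c p.2.1 := by
    simpa using (hasDerivAt_id p.2.1).const_mul c
  exact h.deriv

lemma CXy (c : ℝ) (p : ℝ × ℝ × ℝ) : py (fun r => c * r.2.1 : ℝ × ℝ × ℝ → ℝ) p = 0 :=
  deriv_const p.2.2 (c * p.2.1)

lemma CYx (c : ℝ) (p : ℝ × ℝ × ℝ) : px (fun r => c * r.2.2 : ℝ × ℝ × ℝ → ℝ) p = 0 :=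
  deriv_const p.2.1 (c * p.2.2)

lemma CYy (c : ℝ) (p : ℝ × ℝ × ℝ) : py (fun r => c * r.2.2 : ℝ × ℝ × ℝ → ℝ) p = c := by
  have h : HasDerivAt (fun s : ℝ => c * s) c p.2.2 := by
    simpa using (hasDerivAt_id p.2.2).const_mul c
  exact h.deriv

lemma px_const_mul (c : ℝ) (hf : ContDiff ℝ (⊤ : ℕ∞) f) (p : ℝ × ℝ × ℝ) :
    px (fun r => c * f r) p = c * px f p :=
  deriv_const_mul c (sliceX_hasDerivAt (hf.differentiable (by simp)) p).differentiableAt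

lemma py_const_mul (c : ℝ) (hf : ContDiff ℝ (⊤ : ℕ∞) f) (p : ℝ × ℝ × ℝ) :
    py (fun r => c * f r) p = c * py f p :=
  deriv_const_mul c (sliceY_hasDerivAt (hf.differentiable (by simp)) p).differentiableAt


lemma lapQ_mul (hf : ContDiff ℝ (⊤ : ℕ∞) f) :
    lap (fun r => f r * (r.2.1 ^ 2 + r.2.2 ^ 2))
      = fun r => lap f r * (r.2.1 ^ 2 + r.2.2 ^ 2) + 4 * f r
          + 4 * r.2.1 * px f r + 4 * r.2.2 * py f r := by
  have h1 : px (fun u => f u * (u.2.1 ^ 2 + u.2.2 ^ 2))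
      = fun u => px f u * (u.2.1 ^ 2 + u.2.2 ^ 2) + f u * (2 * u.2.1) := by
    funext u; rw [px_mul hf hQ_smooth u, Qx u]
  have h2 : py (fun u => f u * (u.2.1 ^ 2 + u.2.2 ^ 2))
      = fun u => py f u * (u.2.1 ^ 2 + u.2.2 ^ 2) + f u * (2 * u.2.2) := by
    funext u; rw [py_mul hf hQ_smooth u, Qy u]
  funext r
  show px (px (fun u => f u * (u.2.1 ^ 2 + u.2.2 ^ 2))) r
      + py (py (fun u => f u * (u.2.1 ^ 2 + u.2.2 ^ 2))) r = _
  rw [h1, h2,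
    px_add ((px_smooth hf).mul hQ_smooth) (hf.mul (hCX_smooth 2)) r,
    py_add ((py_smooth hf).mul hQ_smooth) (hf.mul (hCY_smooth 2)) r,
    px_mul (px_smooth hf) hQ_smooth r, Qx r,
    px_mul hf (hCX_smooth 2) r, CXx 2 r,
    py_mul (py_smooth hf) hQ_smooth r, Qy r,
    py_mul hf (hCY_smooth 2) r, CYy 2 r]
  show px (px f) r * _ + _ + (_ + _) + (py (py f) r * _ + _ + (_ + _)) = _
  have hl : lap f r = px (px f) r + py (py f) r := rfl
  rw [hl]; ring

lemma py_shape (hf : ContDiff ℝ (⊤ : ℕ∞) f) (p : ℝ × ℝ × ℝ) :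
    py (fun r => lap f r * (r.2.1 ^ 2 + r.2.2 ^ 2) + 4 * f r
        + 4 * r.2.1 * px f r + 4 * r.2.2 * py f r) p
      = py (lap f) p * (p.2.1 ^ 2 + p.2.2 ^ 2) + lap f p * (2 * p.2.2)
        + 4 * py f p + 4 * p.2.1 * py (px f) p
        + (4 * py f p + 4 * p.2.2 * py (py f) p) := by
  have hA : ContDiff ℝ (⊤ : ℕ∞) (fun r : ℝ × ℝ × ℝ => lap f r * (r.2.1 ^ 2 + r.2.2 ^ 2)) :=
    (lap_smooth hf).mul hQ_smooth
  have hB : ContDiff ℝ (⊤ : ℕ∞) (fun r : ℝ × ℝ × ℝ => 4 * f r) := contDiff_const.mul hf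
  have hC : ContDiff ℝ (⊤ : ℕ∞) (fun r : ℝ × ℝ × ℝ => 4 * r.2.1 * px f r) :=
    (hCX_smooth 4).mul (px_smooth hf)
  have hD : ContDiff ℝ (⊤ : ℕ∞) (fun r : ℝ × ℝ × ℝ => 4 * r.2.2 * py f r) :=
    (hCY_smooth 4).mul (py_smooth hf)
  rw [py_add ((hA.add hB).add hC) hD p, py_add (hA.add hB) hC p, py_add hA hB p,
    py_mul (lap_smooth hf) hQ_smooth p, Qy p, py_const_mul 4 hf p,
    py_mul (hCX_smooth 4) (px_smooth hf) p, CXy 4 p,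
    py_mul (hCY_smooth 4) (py_smooth hf) p, CYy 4 p]
  ring

lemma px_shape (hf : ContDiff ℝ (⊤ : ℕ∞) f) (p : ℝ × ℝ × ℝ) :
    px (fun r => lap f r * (r.2.1 ^ 2 + r.2.2 ^ 2) + 4 * f r
        + 4 * r.2.1 * px f r + 4 * r.2.2 * py f r) p
      = px (lap f) p * (p.2.1 ^ 2 + p.2.2 ^ 2) + lap f p * (2 * p.2.1)
        + 4 * px f p + (4 * px f p + 4 * p.2.1 * px (px f) p)
        + 4 * p.2.2 * px (py f) p := by
  have hA : ContDiff ℝ (⊤ : ℕ∞) (fun r : ℝ × ℝ × ℝ => lap f r * (r.2.1 ^ 2 + r.2.2 ^ 2)) :=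
    (lap_smooth hf).mul hQ_smooth
  have hB : ContDiff ℝ (⊤ : ℕ∞) (fun r : ℝ × ℝ × ℝ => 4 * f r) := contDiff_const.mul hf
  have hC : ContDiff ℝ (⊤ : ℕ∞) (fun r : ℝ × ℝ × ℝ => 4 * r.2.1 * px f r) :=
    (hCX_smooth 4).mul (px_smooth hf)
  have hD : ContDiff ℝ (⊤ : ℕ∞) (fun r : ℝ × ℝ × ℝ => 4 * r.2.2 * py f r) :=
    (hCY_smooth 4).mul (py_smooth hf)
  rw [px_add ((hA.add hB).add hC) hD p, px_add (hA.add hB) hC p, px_add hA hB p,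
    px_mul (lap_smooth hf) hQ_smooth p, Qx p, px_const_mul 4 hf p,
    px_mul (hCX_smooth 4) (px_smooth hf) p, CXx 4 p,
    px_mul (hCY_smooth 4) (py_smooth hf) p, CYx 4 p]
  ring


lemma px_lap (hf : ContDiff ℝ (⊤ : ℕ∞) f) (p : ℝ × ℝ × ℝ) :
    px (lap f) p = px (px (px f)) p + px (py (py f)) p :=
  px_add (px_smooth (px_smooth hf)) (py_smooth (py_smooth hf)) p

lemma py_lap (hf : ContDiff ℝ (⊤ : ℕ∞) f) (p : ℝ × ℝ × ℝ) :
    py (lap f) p = py (px (px f)) p + py (py (py f)) p :=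
  py_add (px_smooth (px_smooth hf)) (py_smooth (py_smooth hf)) p

lemma lap_px (hf : ContDiff ℝ (⊤ : ℕ∞) f) : lap (px f) = px (lap f) := by
  funext p
  have h1 : lap (px f) p = px (px (px f)) p + py (py (px f)) p := rfl
  rw [h1, px_lap hf p]
  congr 1
  rw [show py (px f) = px (py f) from (px_py_comm_fun hf).symm]
  exact (px_py_comm (py_smooth hf) p).symm

lemma lap_py (hf : ContDiff ℝ (⊤ : ℕ∞) f) : lap (py f) = py (lap f) := by
  funext p
  have h1 : lap (py f) p = px (px (py f)) p + py (py (py f)) p := rfl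
  rw [h1, py_lap hf p]
  congr 1
  rw [px_py_comm_fun hf]
  exact px_py_comm (px_smooth hf) p

end aux

/-- q = x² + y² is an adjoint-symmetry of the 2D vorticity equation. -/
theorem vorticity_adjoint_symmetry_x2_add_y2
    (φ : ℝ × ℝ × ℝ → ℝ) (hφ : ContDiff ℝ (⊤ : ℕ∞) φ) (hvort : VorticityEq φ) :
    AdjointSymmetryEq φ (fun p => p.2.1 ^ 2 + p.2.2 ^ 2) := by
  intro p
  show pt (lap (fun r => r.2.1 ^ 2 + r.2.2 ^ 2)) p
      + py (lap (fun r => px φ r * (r.2.1 ^ 2 + r.2.2 ^ 2))) p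
      + px (fun r => py (lap φ) r * (r.2.1 ^ 2 + r.2.2 ^ 2)) p
      - px (lap (fun r => py φ r * (r.2.1 ^ 2 + r.2.2 ^ 2))) p
      - py (fun r => px (lap φ) r * (r.2.1 ^ 2 + r.2.2 ^ 2)) p = 0
  -- term 1
  have hlapQ : lap (fun r : ℝ × ℝ × ℝ => r.2.1 ^ 2 + r.2.2 ^ 2) = fun _ => (4 : ℝ) := by
    funext r
    have h : lap (fun r : ℝ × ℝ × ℝ => r.2.1 ^ 2 + r.2.2 ^ 2) r
        = px (px (fun r => r.2.1 ^ 2 + r.2.2 ^ 2)) r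
          + py (py (fun r => r.2.1 ^ 2 + r.2.2 ^ 2)) r := rfl
    rw [h, show px (fun r : ℝ × ℝ × ℝ => r.2.1 ^ 2 + r.2.2 ^ 2) = fun r => 2 * r.2.1
        from funext Qx,
      show py (fun r : ℝ × ℝ × ℝ => r.2.1 ^ 2 + r.2.2 ^ 2) = fun r => 2 * r.2.2
        from funext Qy, CXx 2 r, CYy 2 r]
    norm_num
  have hT1 : pt (lap (fun r : ℝ × ℝ × ℝ => r.2.1 ^ 2 + r.2.2 ^ 2)) p = 0 := by
    rw [hlapQ]; exact deriv_const p.1 4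
  -- term expansions
  have e2 := lapQ_mul (px_smooth hφ)
  have e4 := lapQ_mul (py_smooth hφ)
  have e3 : px (fun r => py (lap φ) r * (r.2.1 ^ 2 + r.2.2 ^ 2)) p
      = px (py (lap φ)) p * (p.2.1 ^ 2 + p.2.2 ^ 2) + py (lap φ) p * (2 * p.2.1) := by
    rw [px_mul (py_smooth (lap_smooth hφ)) hQ_smooth p, Qx p]
  have e5 : py (fun r => px (lap φ) r * (r.2.1 ^ 2 + r.2.2 ^ 2)) p
      = py (px (lap φ)) p * (p.2.1 ^ 2 + p.2.2 ^ 2) + px (lap φ) p * (2 * p.2.2) := by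
    rw [py_mul (px_smooth (lap_smooth hφ)) hQ_smooth p, Qy p]
  rw [hT1, e2, e4, py_shape (px_smooth hφ) p, px_shape (py_smooth hφ) p, e3, e5]
  -- commutation rewrites
  rw [lap_px hφ, lap_py hφ]
  rw [show py (px (lap φ)) p = px (py (lap φ)) p from (px_py_comm (lap_smooth hφ) p).symm]
  rw [show py (px φ) p = px (py φ) p from (px_py_comm hφ p).symm]
  rw [show py (px (px φ)) p = px (px (py φ)) p by
    rw [(px_py_comm (px_smooth hφ) p).symm,
      show py (px φ) = px (py φ) from (px_py_comm_fun hφ).symm]]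
  rw [show py (py (px φ)) p = px (py (py φ)) p by
    rw [show py (px φ) = px (py φ) from (px_py_comm_fun hφ).symm]
    exact (px_py_comm (py_smooth hφ) p).symm]
  ring
end

section
/- Let φ : ℝ³ → ℝ be a smooth function of (t,x,y) satisfying the 2D incompressible Euler vorticity equation Δφ_t + φ_x·Δφ_y − φ_y·Δφ_x = 0, where Δ = ∂_x² + ∂_y², and let f : ℝ → ℝ be any smooth function. Then q(t,x,y) = y·f(t) satisfies the adjoint-symmetry determining equation along φ: ∂_t Δq + ∂_y Δ(φ_x·q) + ∂_x(Δφ_y·q) − ∂_x Δ(φ_y·q) − ∂_y(Δφ_x·q) = 0 holds identically. -/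
namespace Adj

/-- the x curve through p -/
lemma hasDerivAt_curveX (p : ℝ × ℝ × ℝ) (s : ℝ) :
    HasDerivAt (fun s : ℝ => ((p.1, s, p.2.2) : ℝ × ℝ × ℝ)) ((0:ℝ), (1:ℝ), (0:ℝ)) s :=
  (hasDerivAt_const s p.1).prodMk ((hasDerivAt_id s).prodMk (hasDerivAt_const s p.2.2))

lemma hasDerivAt_curveY (p : ℝ × ℝ × ℝ) (s : ℝ) :
    HasDerivAt (fun s : ℝ => ((p.1, p.2.1, s) : ℝ × ℝ × ℝ)) ((0:ℝ), (0:ℝ), (1:ℝ)) s :=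
  (hasDerivAt_const s p.1).prodMk ((hasDerivAt_const s p.2.1).prodMk (hasDerivAt_id s))

variable {g u v : ℝ × ℝ × ℝ → ℝ} {f : ℝ → ℝ}

lemma hasDerivAt_sliceX (hg : Differentiable ℝ g) (p : ℝ × ℝ × ℝ) :
    HasDerivAt (fun s => g (p.1, s, p.2.2)) (fderiv ℝ g p ((0:ℝ),(1:ℝ),(0:ℝ))) p.2.1 := by
  have h := ((hg (p.1, p.2.1, p.2.2)).hasFDerivAt).comp_hasDerivAt p.2.1
    (hasDerivAt_curveX p p.2.1)
  exact h

lemma hasDerivAt_sliceY (hg : Differentiable ℝ g) (p : ℝ × ℝ × ℝ) :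
    HasDerivAt (fun s => g (p.1, p.2.1, s)) (fderiv ℝ g p ((0:ℝ),(0:ℝ),(1:ℝ))) p.2.2 := by
  have h := ((hg (p.1, p.2.1, p.2.2)).hasFDerivAt).comp_hasDerivAt p.2.2
    (hasDerivAt_curveY p p.2.2)
  exact h

lemma px_eq_fderiv (hg : Differentiable ℝ g) (p : ℝ × ℝ × ℝ) :
    px g p = fderiv ℝ g p ((0:ℝ),(1:ℝ),(0:ℝ)) :=
  (hasDerivAt_sliceX hg p).deriv

lemma py_eq_fderiv (hg : Differentiable ℝ g) (p : ℝ × ℝ × ℝ) :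
    py g p = fderiv ℝ g p ((0:ℝ),(0:ℝ),(1:ℝ)) :=
  (hasDerivAt_sliceY hg p).deriv

lemma smooth_fderiv_apply (hg : ContDiff ℝ (⊤ : ℕ∞) g) (w : ℝ × ℝ × ℝ) :
    ContDiff ℝ (⊤ : ℕ∞) (fun p => fderiv ℝ g p w) :=
  (hg.fderiv_right (by simp)).clm_apply contDiff_const

@[fun_prop]
lemma smooth_px (hg : ContDiff ℝ (⊤ : ℕ∞) g) : ContDiff ℝ (⊤ : ℕ∞) (px g) := by
  have : px g = fun p => fderiv ℝ g p ((0:ℝ),(1:ℝ),(0:ℝ)) :=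
    funext fun p => px_eq_fderiv (hg.differentiable (by simp)) p
  rw [this]; exact smooth_fderiv_apply hg _

@[fun_prop]
lemma smooth_py (hg : ContDiff ℝ (⊤ : ℕ∞) g) : ContDiff ℝ (⊤ : ℕ∞) (py g) := by
  have : py g = fun p => fderiv ℝ g p ((0:ℝ),(0:ℝ),(1:ℝ)) :=
    funext fun p => py_eq_fderiv (hg.differentiable (by simp)) p
  rw [this]; exact smooth_fderiv_apply hg _

lemma swap_px_py (hg : ContDiff ℝ (⊤ : ℕ∞) g) (p : ℝ × ℝ × ℝ) :
    px (py g) p = py (px g) p := by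
  have hd : Differentiable ℝ g := hg.differentiable (by simp)
  have h1 : py g = fun r => fderiv ℝ g r ((0:ℝ),(0:ℝ),(1:ℝ)) :=
    funext fun r => py_eq_fderiv hd r
  have h2 : px g = fun r => fderiv ℝ g r ((0:ℝ),(1:ℝ),(0:ℝ)) :=
    funext fun r => px_eq_fderiv hd r
  have hsymm : IsSymmSndFDerivAt ℝ g p :=
    (hg.contDiffAt).isSymmSndFDerivAt (by rw [minSmoothness_of_isRCLikeNormedField]; exact WithTop.coe_le_coe.mpr le_top)
  have key : ∀ w : ℝ × ℝ × ℝ, ∀ r : ℝ × ℝ × ℝ,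
      fderiv ℝ (fun r => fderiv ℝ g r w) r = (fderiv ℝ (fderiv ℝ g) r).flip w := by
    intro w r
    have hdc : DifferentiableAt ℝ (fderiv ℝ g) r :=
      ((hg.fderiv_right (m := (⊤ : ℕ∞)) (by simp)).differentiable (by simp)) r
    have := fderiv_clm_apply (c := fderiv ℝ g) (u := fun _ => w) hdc
      (differentiableAt_const w)
    simpa using this
  have dX : Differentiable ℝ (fun r => fderiv ℝ g r ((0:ℝ),(1:ℝ),(0:ℝ))) :=
    (smooth_fderiv_apply hg _).differentiable (by simp)
  have dY : Differentiable ℝ (fun r => fderiv ℝ g r ((0:ℝ),(0:ℝ),(1:ℝ))) :=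
    (smooth_fderiv_apply hg _).differentiable (by simp)
  rw [h1, h2, px_eq_fderiv dY, py_eq_fderiv dX, key, key]
  exact hsymm _ _


lemma px_add (hu : ContDiff ℝ (⊤ : ℕ∞) u) (hv : ContDiff ℝ (⊤ : ℕ∞) v) :
    px (fun r => u r + v r) = fun p => px u p + px v p := by
  funext p
  have h1 := hasDerivAt_sliceX (hu.differentiable (by simp)) p
  have h2 := hasDerivAt_sliceX (hv.differentiable (by simp)) p
  show deriv (fun s => u (p.1, s, p.2.2) + v (p.1, s, p.2.2)) p.2.1 = _
  rw [px_eq_fderiv (hu.differentiable (by simp)) p, px_eq_fderiv (hv.differentiable (by simp)) p]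
  exact (h1.add h2).deriv

lemma py_add (hu : ContDiff ℝ (⊤ : ℕ∞) u) (hv : ContDiff ℝ (⊤ : ℕ∞) v) :
    py (fun r => u r + v r) = fun p => py u p + py v p := by
  funext p
  have h1 := hasDerivAt_sliceY (hu.differentiable (by simp)) p
  have h2 := hasDerivAt_sliceY (hv.differentiable (by simp)) p
  show deriv (fun s => u (p.1, p.2.1, s) + v (p.1, p.2.1, s)) p.2.2 = _
  rw [py_eq_fderiv (hu.differentiable (by simp)) p, py_eq_fderiv (hv.differentiable (by simp)) p]
  exact (h1.add h2).deriv

lemma px_mul_yf (hg : ContDiff ℝ (⊤ : ℕ∞) g) (hf : ContDiff ℝ (⊤ : ℕ∞) f) :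
    px (fun r => g r * (r.2.2 * f r.1)) = fun p => px g p * (p.2.2 * f p.1) := by
  funext p
  have h1 := hasDerivAt_sliceX (hg.differentiable (by simp)) p
  show deriv (fun s => g (p.1, s, p.2.2) * (p.2.2 * f p.1)) p.2.1 = _
  rw [px_eq_fderiv (hg.differentiable (by simp)) p]
  exact (h1.mul_const (p.2.2 * f p.1)).deriv

lemma py_mul_yf (hg : ContDiff ℝ (⊤ : ℕ∞) g) (hf : ContDiff ℝ (⊤ : ℕ∞) f) :
    py (fun r => g r * (r.2.2 * f r.1)) =
      fun p => py g p * (p.2.2 * f p.1) + g p * f p.1 := by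
  funext p
  have h1 := hasDerivAt_sliceY (hg.differentiable (by simp)) p
  have h2 : HasDerivAt (fun s : ℝ => s * f p.1) (f p.1) p.2.2 := by
    simpa using (hasDerivAt_id p.2.2).mul_const (f p.1)
  show deriv (fun s => g (p.1, p.2.1, s) * (s * f p.1)) p.2.2 = _
  rw [py_eq_fderiv (hg.differentiable (by simp)) p]
  have := (h1.mul h2).deriv
  exact this

lemma px_mul_ft (hg : ContDiff ℝ (⊤ : ℕ∞) g) (hf : ContDiff ℝ (⊤ : ℕ∞) f) :
    px (fun r => g r * f r.1) = fun p => px g p * f p.1 := by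
  funext p
  have h1 := hasDerivAt_sliceX (hg.differentiable (by simp)) p
  show deriv (fun s => g (p.1, s, p.2.2) * f p.1) p.2.1 = _
  rw [px_eq_fderiv (hg.differentiable (by simp)) p]
  exact (h1.mul_const (f p.1)).deriv

lemma py_mul_ft (hg : ContDiff ℝ (⊤ : ℕ∞) g) (hf : ContDiff ℝ (⊤ : ℕ∞) f) :
    py (fun r => g r * f r.1) = fun p => py g p * f p.1 := by
  funext p
  have h1 := hasDerivAt_sliceY (hg.differentiable (by simp)) p
  show deriv (fun s => g (p.1, p.2.1, s) * f p.1) p.2.2 = _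
  rw [py_eq_fderiv (hg.differentiable (by simp)) p]
  exact (h1.mul_const (f p.1)).deriv


lemma lap_eq (g : ℝ × ℝ × ℝ → ℝ) : lap g = fun p => px (px g) p + py (py g) p := rfl

lemma swap' (hg : ContDiff ℝ (⊤ : ℕ∞) g) : py (px g) = px (py g) :=
  funext fun p => (swap_px_py hg p).symm

lemma px_const (c : ℝ) : px (fun _ => c) = fun _ => 0 := by
  funext p; show deriv (fun _ : ℝ => c) p.2.1 = 0; simp

lemma py_const (c : ℝ) : py (fun _ => c) = fun _ => 0 := by
  funext p; show deriv (fun _ : ℝ => c) p.2.2 = 0; simp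

lemma pt_const (c : ℝ) : pt (fun _ => c) = fun _ => 0 := by
  funext p; show deriv (fun _ : ℝ => c) p.1 = 0; simp

lemma px_y : px (fun r : ℝ × ℝ × ℝ => r.2.2) = fun _ => 0 := by
  funext p; show deriv (fun _ : ℝ => p.2.2) p.2.1 = 0; simp

lemma py_y : py (fun r : ℝ × ℝ × ℝ => r.2.2) = fun _ => 1 := by
  funext p; show deriv (fun s : ℝ => s) p.2.2 = 1; simp

lemma px_yf : px (fun r => r.2.2 * f r.1) = fun _ => 0 := by
  funext p; show deriv (fun _ : ℝ => p.2.2 * f p.1) p.2.1 = 0; simp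

lemma py_yf : py (fun r => r.2.2 * f r.1) = fun p => f p.1 := by
  funext p; show deriv (fun s : ℝ => s * f p.1) p.2.2 = f p.1
  simpa using ((hasDerivAt_id p.2.2).mul_const (f p.1)).deriv

lemma px_ft : px (fun r => f r.1) = fun _ => 0 := by
  funext p; show deriv (fun _ : ℝ => f p.1) p.2.1 = 0; simp

lemma py_ft : py (fun r => f r.1) = fun _ => 0 := by
  funext p; show deriv (fun _ : ℝ => f p.1) p.2.2 = 0; simp

end Adj

/-- q = y·f(t) is an adjoint-symmetry of the 2D vorticity equation. -/
theorem vorticity_adjoint_symmetry_y_f_t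
    (φ : ℝ × ℝ × ℝ → ℝ) (hφ : ContDiff ℝ (⊤ : ℕ∞) φ) (hvort : VorticityEq φ)
    (f : ℝ → ℝ) (hf : ContDiff ℝ (⊤ : ℕ∞) f) :
    AdjointSymmetryEq φ (fun p => p.2.2 * f p.1) := by
  intro p
  simp (disch := fun_prop) only [Adj.lap_eq, Adj.px_add, Adj.py_add, Adj.px_mul_yf,
    Adj.py_mul_yf, Adj.px_mul_ft, Adj.py_mul_ft, Adj.px_yf, Adj.py_yf, Adj.px_ft, Adj.py_ft,
    Adj.px_y, Adj.py_y, Adj.px_const, Adj.py_const, Adj.pt_const, add_zero, zero_add,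
    zero_mul, mul_zero]
  simp (disch := fun_prop) only [Adj.swap']
  ring
end
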